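/- Let F_N^{(1)} be a nonzero time series and F_N^{(2)} a time series of difference dimension d with characteristic polynomial P^{(2)}(z), and let d < L ≤ N−d+1. Let {U_1,…,U_r} be a basis of 𝔏^{(L)}(F_N^{(1)}). Then F_N^{(1)} and F_N^{(2)} are weakly left-separable (their L-trajectory spaces are orthogonal) if and only if P^{(2)}(z) divides the conjugate generating polynomial \overline{U_i}(z) for every i = 1,…,r. -/

import Mathlib

/-! With `E` the shift of sequences, the inner product of `u` with the `n`-th lagged vector of
`f₂` is `(B_u(E) f₂) n`, where `B_u` is the conjugate generating polynomial of `u`.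
Since `(E - λ)^j (P(n) λ^n) = λ^j (Δ^j P)(n) λ^n`, the factor `(E - λ_k)^(deg P_k + 1)` kills the
`k`-th term of `f₂`, while `(E - λ_k)^(deg P_k)` leaves a nonzero geometric sequence; with the
coprimality of the factors this shows that the annihilator of `f₂` in `ℂ[E]` is generated by `Q`.
As `Q` also annihilates `B_u(E) f₂` and is monic of degree `d ≤ N - L + 1`, the vanishing of the
inner products with all lagged vectors forces `B_u(E) f₂ = 0`, i.e. `Q ∣ B_u`. -/

open Polynomial Finset

/-- Trajectory space: span of lagged vectors of the first `N` values of `f`. -/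
noncomputable def trajSpace (f : ℕ → ℂ) (N L : ℕ) : Submodule ℂ (Fin L → ℂ) :=
  Submodule.span ℂ {v : Fin L → ℂ | ∃ i : ℕ, i + L ≤ N ∧ v = fun j : Fin L => f (i + (j : ℕ))}

/-- The Hermitian inner product on `Fin L → ℂ`. -/
noncomputable def hinner {L : ℕ} (u v : Fin L → ℂ) : ℂ :=
  ∑ i, (starRingEnd ℂ) (u i) * v i

section Shift

variable {R : Type*} [CommSemiring R]

variable (R) in
noncomputable def seqShift : Module.End R (ℕ → R) := LinearMap.funLeft R R (· + 1)

lemma seqShift_pow_apply (k : ℕ) (f : ℕ → R) (n : ℕ) : (seqShift R ^ k) f n = f (n + k) := by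
  induction k generalizing f with
  | zero => rfl
  | succ k ih => rw [pow_succ, Module.End.mul_apply, ih]; rfl

lemma aeval_seqShift_apply (p : R[X]) (f : ℕ → R) (n : ℕ) :
    aeval (seqShift R) p f n = ∑ i ∈ range (p.natDegree + 1), p.coeff i * f (n + i) := by
  simp only [aeval_eq_sum_range, LinearMap.coe_sum, Finset.sum_apply, LinearMap.smul_apply,
    Pi.smul_apply, smul_eq_mul, seqShift_pow_apply]

lemma aeval_seqShift_geom (p : R[X]) (a : R) :
    aeval (seqShift R) p (fun n => a ^ n) = p.eval a • fun n => a ^ n := by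
  funext n
  simp only [aeval_seqShift_apply, eval_eq_sum_range, Pi.smul_apply, smul_eq_mul, Finset.sum_mul,
    pow_add]
  exact Finset.sum_congr rfl fun i _ => by ring

lemma eq_zero_of_aeval_seqShift_eq_zero {Q : R[X]} (hQ : Q.Monic) {g : ℕ → R}
    (hg : aeval (seqShift R) Q g = 0) (hinit : ∀ n < Q.natDegree, g n = 0) : g = 0 := by
  funext n
  induction n using Nat.strong_induction_on with
  | _ n ih =>
    obtain hn | hn := lt_or_ge n Q.natDegree
    · exact hinit n hn
    have h := congrFun hg (n - Q.natDegree)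
    rw [aeval_seqShift_apply, Finset.sum_range_succ, Finset.sum_eq_zero, zero_add,
      hQ.coeff_natDegree, one_mul, Nat.sub_add_cancel hn] at h
    · exact h
    intro i hi
    rw [ih _ (by simp at hi; omega), Pi.zero_apply, mul_zero]

lemma dvd_of_forall_lt_aeval_seqShift_eq_zero {Q : R[X]} (hQ : Q.Monic)
    {g : ℕ → R} (hann : ∀ W, aeval (seqShift R) W g = 0 → Q ∣ W)
    (hQg : aeval (seqShift R) Q g = 0)
    {B : R[X]} (hB : ∀ n < Q.natDegree, aeval (seqShift R) B g n = 0) : Q ∣ B := by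
  refine hann B (eq_zero_of_aeval_seqShift_eq_zero hQ ?_ hB)
  rw [← Module.End.mul_apply, ← map_mul, mul_comm, map_mul, Module.End.mul_apply, hQg, map_zero]

end Shift

section ExpPoly

open fwdDiff

variable {R : Type*} [CommRing R]

lemma fwdDiff_iter_comp_natCast (g : R → R) (j : ℕ) :
    (Δ_[1])^[j] (g ∘ Nat.cast) = ((Δ_[1])^[j] g) ∘ (Nat.cast : ℕ → R) := by
  induction j generalizing g with
  | zero => rfl
  | succ j ih =>
    rw [Function.iterate_succ_apply, Function.iterate_succ_apply, ← ih]
    congr 1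
    funext n
    simp [fwdDiff]

lemma aeval_X_sub_C_pow_seqShift_mul_geom (a : R) (g : ℕ → R) (j : ℕ) :
    aeval (seqShift R) ((X - C a) ^ j) (fun n => g n * a ^ n) =
      a ^ j • fun n => ((Δ_[1])^[j] g) n * a ^ n := by
  induction j generalizing g with
  | zero => simp
  | succ j ih =>
    rw [pow_succ', map_mul, Module.End.mul_apply, ih, map_smul, Function.iterate_succ_apply']
    funext n
    simp only [seqShift, aeval_sub, aeval_X, aeval_C, LinearMap.sub_apply,
      Module.algebraMap_end_apply, Pi.smul_apply, Pi.sub_apply, LinearMap.funLeft_apply, pow_succ,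
      smul_eq_mul, fwdDiff]
    ring

def expPoly (a : R) (p : R[X]) : ℕ → R := fun n => p.eval (n : R) * a ^ n

lemma aeval_X_sub_C_pow_expPoly (a : R) (p : R[X]) (j : ℕ) :
    aeval (seqShift R) ((X - C a) ^ j) (expPoly a p) =
      a ^ j • fun n : ℕ => ((Δ_[1])^[j] p.eval) n * a ^ n := by
  have h := aeval_X_sub_C_pow_seqShift_mul_geom a (p.eval ∘ Nat.cast) j
  rwa [fwdDiff_iter_comp_natCast] at h

lemma aeval_expPoly_eq_zero_of_dvd {a : R} {p W : R[X]}
    (h : (X - C a) ^ (p.natDegree + 1) ∣ W) :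
    aeval (seqShift R) W (expPoly a p) = 0 := by
  obtain ⟨V, rfl⟩ := h
  rw [mul_comm, map_mul, Module.End.mul_apply, aeval_X_sub_C_pow_expPoly,
    p.fwdDiff_iter_degree_add_one_eq_zero]
  simp [← Pi.zero_def]

lemma aeval_X_sub_C_pow_natDegree_expPoly (a : R) (p : R[X]) :
    aeval (seqShift R) ((X - C a) ^ p.natDegree) (expPoly a p) =
      (a ^ p.natDegree * p.leadingCoeff * p.natDegree.factorial) • fun n => a ^ n := by
  rw [aeval_X_sub_C_pow_expPoly, p.fwdDiff_iter_degree_eq_factorial]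
  funext n
  simp [mul_assoc]

lemma aeval_X_sub_C_pow_natDegree_mul_expPoly_ne_zero [IsDomain R] [CharZero R] {a : R}
    (ha : a ≠ 0) {p V : R[X]} (hp : p ≠ 0) (hV : V.eval a ≠ 0) :
    aeval (seqShift R) ((X - C a) ^ p.natDegree * V) (expPoly a p) ≠ 0 := by
  rw [mul_comm, map_mul, Module.End.mul_apply, aeval_X_sub_C_pow_natDegree_expPoly, map_smul,
    aeval_seqShift_geom]
  intro h
  have h0 := congrFun h 0
  simp only [Pi.smul_apply, smul_eq_mul, pow_zero, mul_one, Pi.zero_apply] at h0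
  exact mul_ne_zero (mul_ne_zero (mul_ne_zero (pow_ne_zero _ ha) (leadingCoeff_ne_zero.mpr hp))
    (Nat.cast_ne_zero.mpr p.natDegree.factorial_ne_zero)) hV h0

end ExpPoly

lemma exists_mul_eq_X_sub_C_pow_mul_of_not_dvd {R : Type*} [CommRing R] [IsDomain R] {a : R}
    {s : ℕ} {W : R[X]} (h : ¬ (X - C a) ^ (s + 1) ∣ W) :
    ∃ A V : R[X], A * W = (X - C a) ^ s * V ∧ V.eval a ≠ 0 := by
  have hW : W ≠ 0 := by rintro rfl; exact h (dvd_zero _)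
  have ht : W.rootMultiplicity a ≤ s := by
    by_contra! ht
    exact h ((pow_dvd_pow _ ht).trans (W.pow_rootMultiplicity_dvd a))
  refine ⟨(X - C a) ^ (s - W.rootMultiplicity a), W /ₘ (X - C a) ^ W.rootMultiplicity a, ?_,
    eval_divByMonic_pow_rootMultiplicity_ne_zero a hW⟩
  calc (X - C a) ^ (s - W.rootMultiplicity a) * W
      = (X - C a) ^ (s - W.rootMultiplicity a) * ((X - C a) ^ W.rootMultiplicity a *
          (W /ₘ (X - C a) ^ W.rootMultiplicity a)) := by
        rw [W.pow_mul_divByMonic_rootMultiplicity_eq a]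
    _ = _ := by rw [← mul_assoc, ← pow_add, Nat.sub_add_cancel ht]

section SumExpPoly

variable {K : Type*} [Field K] {ι : Type*} [Fintype ι] {a : ι → K} {p : ι → K[X]}

lemma aeval_sum_expPoly_eq_of_dvd {k : ι} {W : K[X]}
    (hW : ∀ j ≠ k, (X - C (a j)) ^ ((p j).natDegree + 1) ∣ W) :
    aeval (seqShift K) W (∑ j, expPoly (a j) (p j)) =
      aeval (seqShift K) W (expPoly (a k) (p k)) := by
  rw [map_sum]
  exact Finset.sum_eq_single k (fun j _ hj => aeval_expPoly_eq_zero_of_dvd (hW j hj))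
    (fun hk => absurd (Finset.mem_univ k) hk)

theorem prod_dvd_of_aeval_sum_expPoly_eq_zero [CharZero K] (ha_inj : Function.Injective a)
    (ha : ∀ k, a k ≠ 0) (hp : ∀ k, p k ≠ 0) {W : K[X]}
    (hW : aeval (seqShift K) W (∑ k, expPoly (a k) (p k)) = 0) :
    ∏ k, (X - C (a k)) ^ ((p k).natDegree + 1) ∣ W := by
  classical
  refine Fintype.prod_dvd_of_coprime (fun i j hij => ((pairwise_coprime_X_sub_C ha_inj) hij).pow)
    fun k => ?_
  by_contra hk
  obtain ⟨A, V, hAV, hV⟩ := exists_mul_eq_X_sub_C_pow_mul_of_not_dvd hk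
  -- `G` kills every summand but the `k`-th and does not vanish at `a k`.
  set G := ∏ j ∈ univ.erase k, (X - C (a j)) ^ ((p j).natDegree + 1)
  have hG : G.eval (a k) ≠ 0 := by
    rw [eval_prod, Finset.prod_ne_zero_iff]
    intro j hj
    simpa [sub_eq_zero] using fun h => (Finset.mem_erase.mp hj).1 (ha_inj h).symm
  have hGAW : G * A * W = (X - C (a k)) ^ (p k).natDegree * (G * V) := by
    rw [mul_assoc, hAV]; ring
  apply aeval_X_sub_C_pow_natDegree_mul_expPoly_ne_zero (ha k) (hp k)
    (by rw [eval_mul]; exact mul_ne_zero hG hV)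
  rw [← hGAW, ← aeval_sum_expPoly_eq_of_dvd, map_mul, Module.End.mul_apply, hW, map_zero]
  intro j hj
  have hjG := Finset.dvd_prod_of_mem (fun j => (X - C (a j)) ^ ((p j).natDegree + 1))
    (Finset.mem_erase.mpr ⟨hj, Finset.mem_univ j⟩)
  exact hjG.trans ((dvd_mul_right _ _).trans (dvd_mul_right _ _))

theorem aeval_sum_expPoly_eq_zero_iff [CharZero K] (ha_inj : Function.Injective a)
    (ha : ∀ k, a k ≠ 0) (hp : ∀ k, p k ≠ 0) (W : K[X]) :
    aeval (seqShift K) W (∑ k, expPoly (a k) (p k)) = 0 ↔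
      ∏ k, (X - C (a k)) ^ ((p k).natDegree + 1) ∣ W := by
  refine ⟨prod_dvd_of_aeval_sum_expPoly_eq_zero ha_inj ha hp, fun h => ?_⟩
  rw [map_sum]
  refine Finset.sum_eq_zero fun k _ => aeval_expPoly_eq_zero_of_dvd (dvd_trans ?_ h)
  exact Finset.dvd_prod_of_mem (fun j => (X - C (a j)) ^ ((p j).natDegree + 1)) (mem_univ k)

end SumExpPoly

lemma hinner_eq_aeval_seqShift {L : ℕ} (u : Fin L → ℂ) (f : ℕ → ℂ) (n : ℕ) :
    hinner u (fun j : Fin L => f (n + j)) =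
      aeval (seqShift ℂ) (∑ k : Fin L, C ((starRingEnd ℂ) (u k)) * X ^ (k : ℕ)) f n := by
  simp only [hinner, map_sum, map_mul, aeval_C, aeval_X_pow, LinearMap.coe_sum, Finset.sum_apply,
    Module.End.mul_apply, Module.algebraMap_end_apply, Pi.smul_apply, smul_eq_mul,
    seqShift_pow_apply]

lemma hinner_eq_zero_of_mem_span {L : ℕ} {s t : Set (Fin L → ℂ)}
    (h : ∀ a ∈ s, ∀ b ∈ t, hinner a b = 0) {u v : Fin L → ℂ} (hu : u ∈ Submodule.span ℂ s)
    (hv : v ∈ Submodule.span ℂ t) : hinner u v = 0 := by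
  induction hu, hv using Submodule.span_induction₂ with
  | mem_mem a b ha hb => exact h a ha b hb
  | zero_left => simp [hinner]
  | zero_right => simp [hinner]
  | add_left _ _ _ _ _ _ h₁ h₂ =>
    simp only [hinner] at h₁ h₂ ⊢
    simp [add_mul, Finset.sum_add_distrib, h₁, h₂]
  | add_right _ _ _ _ _ _ h₁ h₂ =>
    simp only [hinner] at h₁ h₂ ⊢
    simp [mul_add, Finset.sum_add_distrib, h₁, h₂]
  | smul_left c _ _ _ _ h₁ =>
    simp only [hinner] at h₁ ⊢
    simp [mul_assoc, ← Finset.mul_sum, h₁]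
  | smul_right c _ _ _ _ h₁ =>
    simp only [hinner] at h₁ ⊢
    simp [mul_left_comm _ c, ← Finset.mul_sum, h₁]

theorem left_separable_iff_charpoly_dvd_basis_general
    (N L : ℕ) (f₁ f₂ : ℕ → ℂ)
    (m : ℕ) (lam : Fin m → ℂ) (P : Fin m → Polynomial ℂ)
    (hinj : Function.Injective lam) (hne : ∀ k, lam k ≠ 0) (hP : ∀ k, P k ≠ 0)
    (hf₂ : ∀ n : ℕ, f₂ n = ∑ k, (P k).eval (n : ℂ) * lam k ^ n)
    (Q : Polynomial ℂ) (hQ : Q = ∏ k, (X - C (lam k)) ^ ((P k).natDegree + 1))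
    (d : ℕ) (hd : d = Q.natDegree)
    (hLN : L + d ≤ N + 1)
    (r : ℕ) (U : Fin r → (Fin L → ℂ))
    (hUspan : Submodule.span ℂ (Set.range U) = trajSpace f₁ N L) :
    (∀ u ∈ trajSpace f₁ N L, ∀ v ∈ trajSpace f₂ N L, hinner u v = 0) ↔
      ∀ i : Fin r, Q ∣ ∑ k : Fin L, C ((starRingEnd ℂ) (U i k)) * X ^ (k : ℕ) := by
  have hf₂_eq : f₂ = ∑ k, expPoly (lam k) (P k) := funext fun n => by simp [hf₂, expPoly]
  have hann : ∀ W, aeval (seqShift ℂ) W f₂ = 0 ↔ Q ∣ W := by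
    rw [hf₂_eq, hQ]; exact aeval_sum_expPoly_eq_zero_iff hinj hne hP
  have hQ_monic : Q.Monic := hQ ▸ monic_prod_of_monic _ _ fun k _ => (monic_X_sub_C _).pow _
  have key : ∀ u : Fin L → ℂ, (∀ n, n + L ≤ N → hinner u (fun j : Fin L => f₂ (n + j)) = 0) ↔
      Q ∣ ∑ k : Fin L, C ((starRingEnd ℂ) (u k)) * X ^ (k : ℕ) := by
    intro u
    simp only [hinner_eq_aeval_seqShift]
    constructor
    · intro h
      refine dvd_of_forall_lt_aeval_seqShift_eq_zero hQ_monic (fun W => (hann W).1)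
        ((hann Q).2 dvd_rfl) fun n hn => h n ?_
      rw [← hd] at hn
      omega
    · intro h n _
      rw [(hann _).2 h, Pi.zero_apply]
  constructor
  · intro h i
    refine (key (U i)).1 fun n hn => h _ ?_ _ (Submodule.subset_span ⟨n, hn, rfl⟩)
    exact hUspan ▸ Submodule.subset_span ⟨i, rfl⟩
  · intro h u hu v hv
    rw [← hUspan] at hu
    refine hinner_eq_zero_of_mem_span ?_ hu hv
    rintro _ ⟨i, rfl⟩ _ ⟨n, hn, rfl⟩
    exact (key (U i)).2 (h i) n hn

/-- Separability criterion: a nonzero series `f₁` and a series `f₂` of difference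
dimension `d` with characteristic polynomial `Q`, `d < L ≤ N - d + 1`, are weakly
left-separable iff `Q` divides the conjugate generating polynomial of every
element of a basis of the trajectory space of `f₁`. -/
theorem left_separable_iff_charpoly_dvd_basis
    (N L : ℕ) (f₁ f₂ : ℕ → ℂ) (hf₁ : ∃ n, n < N ∧ f₁ n ≠ 0)
    (m : ℕ) (lam : Fin m → ℂ) (P : Fin m → Polynomial ℂ)
    (hinj : Function.Injective lam) (hne : ∀ k, lam k ≠ 0) (hP : ∀ k, P k ≠ 0)
    (hf₂ : ∀ n : ℕ, f₂ n = ∑ k, (P k).eval (n : ℂ) * lam k ^ n)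
    (Q : Polynomial ℂ) (hQ : Q = ∏ k, (X - C (lam k)) ^ ((P k).natDegree + 1))
    (d : ℕ) (hd : d = Q.natDegree)
    (hdN : 2 * d ≤ N) (hdL : d < L) (hLN : L + d ≤ N + 1)
    (r : ℕ) (U : Fin r → (Fin L → ℂ))
    (hU : LinearIndependent ℂ U)
    (hUspan : Submodule.span ℂ (Set.range U) = trajSpace f₁ N L) :
    (∀ u ∈ trajSpace f₁ N L, ∀ v ∈ trajSpace f₂ N L, hinner u v = 0) ↔
      ∀ i : Fin r, Q ∣ ∑ k : Fin L, C ((starRingEnd ℂ) (U i k)) * X ^ (k : ℕ) :=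
  left_separable_iff_charpoly_dvd_basis_general N L f₁ f₂ m lam P hinj hne hP hf₂ Q hQ d hd hLN r U
    hUspan
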